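/- arXiv:2405.16349 — 6 statements merged into one kernel-verified Lean document; each statement's English description precedes it below -/
import Mathlib

section
/- For nonnegative integers k ≤ ν, we have ∑_{μ=0}^{ν-k} C(2ν+1, 2ν-2μ+1) · C(ν-μ, k) = 4^{ν-k} · (2ν-k)! / (k! · (2ν-2k)!). -/
/-!
Put `j = ν - μ`: the sum is `A n k = ∑ⱼ C(n, 2j+1) C(j, k)` at `n = 2ν + 1`. Splitting Pascal's
rule into its even and odd parts gives `A (n+2) (k+1) = 2 A (n+1) (k+1) + A n k` and
`A (n+2) 0 = 2 A (n+1) 0`; in generating-function terms, `((1+y)ⁿ - (1-y)ⁿ) / 2y`, as a polynomial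
in `x = y² - 1`, satisfies `fₙ₊₂ = 2 fₙ₊₁ + x fₙ`. By Pascal's rule again, `2ⁿ C(n-k, k)` satisfies
the same recursion as `4ᵏ A (n+1) k`, so the two agree, and at `n = 2ν` this is the claim because
`C(2ν-k, k) = (2ν-k)! / (k! (2ν-2k)!)`.
-/

open Finset

section ParitySums

variable {M : Type*} [AddCommMonoid M]

def oddChooseSum (n : ℕ) (f : ℕ → M) : M :=
  ∑ j ∈ range (n + 1), n.choose (2 * j + 1) • f j

def evenChooseSum (n : ℕ) (f : ℕ → M) : M :=
  ∑ j ∈ range (n + 1), n.choose (2 * j) • f j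

theorem oddChooseSum_succ (n : ℕ) (f : ℕ → M) :
    oddChooseSum (n + 1) f = evenChooseSum n f + oddChooseSum n f := by
  rw [oddChooseSum, sum_range_succ, Nat.choose_eq_zero_of_lt (by omega), zero_smul, add_zero]
  simp only [Nat.choose_succ_succ', add_smul, sum_add_distrib]
  rfl

theorem evenChooseSum_succ (n : ℕ) (f : ℕ → M) :
    evenChooseSum (n + 1) f = evenChooseSum n f + oddChooseSum n (fun j => f (j + 1)) := by
  have htop : n.choose (2 * (n + 1)) • f (n + 1) = 0 := by
    rw [Nat.choose_eq_zero_of_lt (by omega), zero_smul]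
  rw [evenChooseSum, evenChooseSum, ← add_zero (∑ j ∈ range (n + 1), _), ← htop,
    ← sum_range_succ, sum_range_succ', sum_range_succ' _ (n + 1)]
  simp only [mul_add, Nat.choose_succ_succ', add_smul, sum_add_distrib, Nat.choose_zero_right,
    mul_zero]
  rw [oddChooseSum]
  abel

theorem oddChooseSum_add_two (n : ℕ) (f : ℕ → M) :
    oddChooseSum (n + 2) f + oddChooseSum n f
      = 2 • oddChooseSum (n + 1) f + oddChooseSum n (fun j => f (j + 1)) := by
  rw [oddChooseSum_succ (n + 1), evenChooseSum_succ, oddChooseSum_succ n]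
  abel

end ParitySums

theorem oddChooseSum_choose_add_two (n k : ℕ) :
    oddChooseSum (n + 2) (·.choose (k + 1))
      = 2 * oddChooseSum (n + 1) (·.choose (k + 1)) + oddChooseSum n (·.choose k) := by
  have h := oddChooseSum_add_two n (·.choose (k + 1))
  simp only [Nat.choose_succ_succ', smul_eq_mul] at h
  simp only [oddChooseSum, smul_eq_mul, mul_add, sum_add_distrib] at h ⊢
  omega

theorem oddChooseSum_one_add_two (n : ℕ) :
    oddChooseSum (n + 2) (fun _ => 1) = 2 * oddChooseSum (n + 1) (fun _ => 1) := by
  have h := oddChooseSum_add_two n (fun _ => 1)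
  rw [smul_eq_mul] at h
  omega

theorem four_pow_mul_oddChooseSum_choose :
    ∀ n k : ℕ, 4 ^ k * oddChooseSum (n + 1) (·.choose k) = 2 ^ n * (n - k).choose k
  | 0, k => by cases k <;> simp [oddChooseSum, sum_range_succ, Nat.choose_eq_zero_of_lt]
  | 1, k + 1 => by simp [oddChooseSum, sum_range_succ, Nat.choose_eq_zero_of_lt]
  | n + 1, 0 => by
    have ih := four_pow_mul_oddChooseSum_choose n 0
    simp only [pow_zero, one_mul, Nat.choose_zero_right, mul_one] at ih ⊢
    rw [oddChooseSum_one_add_two, ih, pow_succ, mul_comm]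
  | n + 2, k + 1 => by
    have ih₁ := four_pow_mul_oddChooseSum_choose (n + 1) (k + 1)
    have ih₀ := four_pow_mul_oddChooseSum_choose n k
    have hpascal : (n + 2 - (k + 1)).choose (k + 1) = (n - k).choose (k + 1) + (n - k).choose k := by
      rcases le_or_gt k n with hkn | hnk
      · rw [show n + 2 - (k + 1) = n - k + 1 by omega, Nat.choose_succ_succ', add_comm]
      · rw [Nat.sub_eq_zero_of_le (by omega), Nat.sub_eq_zero_of_le hnk.le]
        simp [Nat.choose_eq_zero_of_lt, show 0 < k by omega]
    rw [oddChooseSum_choose_add_two, hpascal, mul_add, ← mul_assoc, mul_comm _ 2, mul_assoc, ih₁,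
      pow_succ 4, mul_comm _ 4, mul_assoc, ih₀, show n + 1 - (k + 1) = n - k by omega]
    ring

theorem sum_choose_mul_choose_eq_oddChooseSum (ν k : ℕ) :
    ∑ μ ∈ range (ν - k + 1), (2 * ν + 1).choose (2 * ν - 2 * μ + 1) * (ν - μ).choose k
      = oddChooseSum (2 * ν + 1) (·.choose k) := by
  calc _ = ∑ μ ∈ range (ν + 1), (2 * ν + 1).choose (2 * ν - 2 * μ + 1) * (ν - μ).choose k := by
        refine sum_subset (range_subset_range.2 (by omega)) fun μ hμ hμk => ?_
        simp only [mem_range] at hμ hμk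
        rw [Nat.choose_eq_zero_of_lt (n := ν - μ) (by omega), mul_zero]
    _ = ∑ j ∈ range (ν + 1), (2 * ν + 1).choose (2 * j + 1) * j.choose k := by
        rw [← sum_range_reflect]
        refine sum_congr rfl fun j hj => ?_
        rw [mem_range] at hj
        rw [show ν - (ν + 1 - 1 - j) = j by omega, show 2 * ν - 2 * (ν + 1 - 1 - j) = 2 * j by omega]
    _ = oddChooseSum (2 * ν + 1) (·.choose k) := by
        refine sum_subset (range_subset_range.2 (by omega)) fun j _ hj => ?_
        rw [mem_range] at hj
        rw [Nat.choose_eq_zero_of_lt (by omega), zero_mul]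

theorem stmt_0 (ν k : ℕ) (hk : k ≤ ν) :
    (∑ μ ∈ Finset.range (ν - k + 1),
      ((Nat.choose (2 * ν + 1) (2 * ν - 2 * μ + 1) : ℚ) * (Nat.choose (ν - μ) k : ℚ)))
      = 4 ^ (ν - k) * (Nat.factorial (2 * ν - k) : ℚ) /
          ((Nat.factorial k : ℚ) * (Nat.factorial (2 * ν - 2 * k) : ℚ)) := by
  have hclosed := four_pow_mul_oddChooseSum_choose (2 * ν) k
  have hpow : 2 ^ (2 * ν) = 4 ^ k * 4 ^ (ν - k) := by
    rw [← pow_add, Nat.add_sub_cancel' hk, pow_mul]; norm_num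
  rw [← sum_choose_mul_choose_eq_oddChooseSum, hpow, mul_assoc] at hclosed
  have hsum := Nat.eq_of_mul_eq_mul_left (by positivity) hclosed
  rw [show 2 * ν - 2 * k = 2 * ν - k - k by omega, mul_div_assoc,
    ← Nat.cast_choose ℚ (by omega : k ≤ 2 * ν - k)]
  exact_mod_cast hsum
end

section
/- For nonnegative integers μ ≤ ν, binomial(ν+1/2, ν-μ) · binomial(ν-1/2, μ) = 4^{-ν} · C(2ν, ν) · C(2ν+1, 2μ+1), where binomial(α, j) := (α)(α-1)⋯(α-j+1)/j! is the generalized binomial coefficient for real α. -/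
/-- The generalized binomial coefficient `α(α-1)⋯(α-j+1)/j!` for real `α`. -/
noncomputable def genBinom (α : ℝ) (j : ℕ) : ℝ :=
  (∏ i ∈ Finset.range j, (α - i)) / (Nat.factorial j : ℝ)

/-! Put `ν = μ + k`. Both generalized binomials have half-integer arguments, so they are
ratios of factorials:
`binomial(b + j + 1/2, j) = (2(b+j)+1)! b! / (4^j (b+j)! (2b+1)! j!)` and
`binomial(b + j - 1/2, j) = (2(b+j))! b! / (4^j (b+j)! (2b)! j!)`,
each by induction on `j`: the new factor `b + j + 1 ± 1/2` times `4 (b + j + 1)` is the product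
of the two new factors of the factorial `(2(b+j) + …)!`. Taking `(b, j) = (μ, k)` and `(k, μ)`,
the product of the two is `4^{-ν} C(2ν, ν) C(2ν+1, 2μ+1)` after cancellation. -/

open Nat Finset

theorem prod_range_add_half_sub_mul (b j : ℕ) :
    (∏ i ∈ range j, (((b + j : ℕ) : ℝ) + 1 / 2 - i)) * (4 ^ j * (b + j)! * (2 * b + 1)!) =
      (2 * (b + j) + 1)! * b ! := by
  induction j with
  | zero => simp [mul_comm]
  | succ j ih =>
    have shift : ∏ i ∈ range j, (((b + (j + 1) : ℕ) : ℝ) + 1 / 2 - ((i + 1 : ℕ) : ℝ)) =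
        ∏ i ∈ range j, (((b + j : ℕ) : ℝ) + 1 / 2 - i) :=
      prod_congr rfl fun i _ => by push_cast; ring
    rw [prod_range_succ', shift, ← add_assoc,
      show 2 * (b + j + 1) + 1 = 2 * (b + j) + 1 + 1 + 1 by ring,
      factorial_succ (2 * (b + j) + 1 + 1), factorial_succ (2 * (b + j) + 1),
      factorial_succ (b + j)]
    push_cast at ih ⊢
    linear_combination (2 * ((b : ℝ) + j) + 3) * (2 * ((b : ℝ) + j) + 2) * ih

theorem prod_range_sub_half_sub_mul (b j : ℕ) :
    (∏ i ∈ range j, (((b + j : ℕ) : ℝ) - 1 / 2 - i)) * (4 ^ j * (b + j)! * (2 * b)!) =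
      (2 * (b + j))! * b ! := by
  induction j with
  | zero => simp [mul_comm]
  | succ j ih =>
    have shift : ∏ i ∈ range j, (((b + (j + 1) : ℕ) : ℝ) - 1 / 2 - ((i + 1 : ℕ) : ℝ)) =
        ∏ i ∈ range j, (((b + j : ℕ) : ℝ) - 1 / 2 - i) :=
      prod_congr rfl fun i _ => by push_cast; ring
    rw [prod_range_succ', shift, ← add_assoc, show 2 * (b + j + 1) = 2 * (b + j) + 1 + 1 by ring,
      factorial_succ (2 * (b + j) + 1), factorial_succ (2 * (b + j)), factorial_succ (b + j)]
    push_cast at ih ⊢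
    linear_combination (2 * ((b : ℝ) + j) + 2) * (2 * ((b : ℝ) + j) + 1) * ih

theorem genBinom_add_half (b j : ℕ) :
    genBinom (((b + j : ℕ) : ℝ) + 1 / 2) j =
      (2 * (b + j) + 1)! * b ! / (4 ^ j * (b + j)! * (2 * b + 1)! * j !) := by
  rw [genBinom, ← prod_range_add_half_sub_mul, div_mul_eq_div_div,
    mul_div_cancel_right₀ _ (by positivity)]

theorem genBinom_sub_half (b j : ℕ) :
    genBinom (((b + j : ℕ) : ℝ) - 1 / 2) j =
      (2 * (b + j))! * b ! / (4 ^ j * (b + j)! * (2 * b)! * j !) := by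
  rw [genBinom, ← prod_range_sub_half_sub_mul, div_mul_eq_div_div,
    mul_div_cancel_right₀ _ (by positivity)]

theorem stmt_2 (ν μ : ℕ) (h : μ ≤ ν) :
    genBinom ((ν : ℝ) + 1 / 2) (ν - μ) * genBinom ((ν : ℝ) - 1 / 2) μ =
      4 ^ (-(ν : ℤ)) * (Nat.choose (2 * ν) ν : ℝ) * (Nat.choose (2 * ν + 1) (2 * μ + 1) : ℝ) := by
  obtain ⟨k, rfl⟩ := Nat.exists_eq_add_of_le h
  rw [Nat.add_sub_cancel_left, genBinom_add_half, add_comm μ k, genBinom_sub_half,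
    cast_choose ℝ (by omega : k + μ ≤ 2 * (k + μ)),
    cast_choose ℝ (by omega : 2 * μ + 1 ≤ 2 * (k + μ) + 1),
    show 2 * (k + μ) - (k + μ) = k + μ by omega,
    show 2 * (k + μ) + 1 - (2 * μ + 1) = 2 * k by omega, zpow_neg, zpow_natCast, pow_add]
  field_simp
end

section
/- For nonnegative integers μ ≤ ν, binomial(ν+1/2, μ) · binomial(ν-1/2, ν-μ) = 4^{-ν} · C(2ν, ν) · C(2ν+1, 2ν-2μ+1). -/
open Nat

theorem genBinom_succ (α : ℝ) (j : ℕ) :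
    genBinom α (j + 1) = genBinom α j * (α - j) / (j + 1) := by
  simp only [genBinom, Finset.prod_range_succ, factorial_succ, cast_mul, cast_succ]
  field_simp

theorem genBinom_add_add_half (j k : ℕ) :
    genBinom (j + k + 1 / 2) j =
      (2 * (j + k) + 1)! * k ! / (4 ^ j * j ! * (2 * k + 1)! * (j + k)!) := by
  induction j generalizing k with
  | zero => simp [genBinom, field]
  | succ j ih =>
    have hx : ((j + 1 : ℕ) : ℝ) + k + 1 / 2 = j + (k + 1 : ℕ) + 1 / 2 := by push_cast; ring
    rw [genBinom_succ, hx, ih, show j + (k + 1) = j + 1 + k by ring,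
      show 2 * (k + 1) + 1 = 2 * k + 1 + 1 + 1 by ring]
    simp only [factorial_succ, cast_mul]
    push_cast
    field_simp
    ring

theorem genBinom_add_sub_half (j k : ℕ) :
    genBinom (j + k - 1 / 2) j =
      (2 * (j + k))! * k ! / (4 ^ j * j ! * (j + k)! * (2 * k)!) := by
  induction j generalizing k with
  | zero => simp [genBinom, field]
  | succ j ih =>
    have hx : ((j + 1 : ℕ) : ℝ) + k - 1 / 2 = j + (k + 1 : ℕ) - 1 / 2 := by push_cast; ring
    rw [genBinom_succ, hx, ih, show j + (k + 1) = j + 1 + k by ring,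
      show 2 * (k + 1) = 2 * k + 1 + 1 by ring]
    simp only [factorial_succ, cast_mul]
    push_cast
    field_simp
    ring

theorem stmt_3 (ν μ : ℕ) (h : μ ≤ ν) :
    genBinom ((ν : ℝ) + 1 / 2) μ * genBinom ((ν : ℝ) - 1 / 2) (ν - μ) =
      4 ^ (-(ν : ℤ)) * (Nat.choose (2 * ν) ν : ℝ) *
        (Nat.choose (2 * ν + 1) (2 * ν - 2 * μ + 1) : ℝ) := by
  obtain ⟨k, rfl⟩ := Nat.exists_eq_add_of_le h
  have hplus := genBinom_add_add_half μ k
  have hminus := genBinom_add_sub_half k μ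
  rw [add_comm k μ] at hminus
  rw [Nat.add_sub_cancel_left, show 2 * (μ + k) - 2 * μ + 1 = 2 * k + 1 by omega, cast_add,
    hplus, add_comm (μ : ℝ), hminus, zpow_neg, zpow_natCast,
    cast_choose ℝ (show μ + k ≤ 2 * (μ + k) by omega),
    cast_choose ℝ (show 2 * k + 1 ≤ 2 * (μ + k) + 1 by omega),
    show 2 * (μ + k) - (μ + k) = μ + k by omega,
    show 2 * (μ + k) + 1 - (2 * k + 1) = 2 * μ by omega, pow_add]
  field_simp
end

section
/- For all real numbers a, b, c with c - a - b > 0 and c not a nonpositive integer, the hypergeometric series ₂F₁(a, b; c; 1) := ∑_{j≥0} (a)_j (b)_j / ((c)_j j!) converges and equals Γ(c)Γ(c-a-b)/(Γ(c-a)Γ(c-b)) (Gauss's summation theorem). -/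
/-!
Gauss's contiguous relation `c (c - a - b) F(c) = (c - a) (c - b) F(c + 1)` for `F(c) = ₂F₁(a, b; c; 1)`
comes from summing a coefficientwise identity that telescopes; the boundary term `n A_n` tends to `0`
because the `n`-th coefficient `A_n` is of order `n ^ (a + b - c - 1)`, which also gives convergence.
Iterating, `F(c) (c)_n (c - a - b)_n = F(c + n) (c - a)_n (c - b)_n`. As `n → ∞`, `F(c + n) → 1`
since every coefficient past the first is `O(1 / (c + n))`, and by Euler's limit formula
`(x)_n ~ n! n ^ (x - 1) / Γ(x)` the ratio of Pochhammer symbols tends to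
`Γ(c) Γ(c - a - b) / (Γ(c - a) Γ(c - b))`.
-/

open Filter Topology Finset Polynomial
open scoped Nat

theorem ascPochhammer_eval_eq_prod_range {R : Type*} [CommSemiring R] (n : ℕ) (r : R) :
    (ascPochhammer R n).eval r = ∏ j ∈ range n, (r + j) := by
  induction n with
  | zero => simp
  | succ n ih => rw [ascPochhammer_succ_eval, ih, prod_range_succ]

theorem ascPochhammer_eval_ne_zero {R : Type*} [CommRing R] [IsDomain R] {r : R}
    (hr : ∀ m : ℕ, r ≠ -m) (n : ℕ) : (ascPochhammer R n).eval r ≠ 0 := by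
  rw [Ne, ascPochhammer_eval_eq_zero_iff]
  rintro ⟨m, -, hm⟩
  exact hr m (by rw [hm, neg_neg])

theorem ascPochhammer_eval_add_one_mul {R : Type*} [CommSemiring R] (r : R) (n : ℕ) :
    (ascPochhammer R n).eval (r + 1) * r = (ascPochhammer R n).eval r * (r + n) := by
  have h := congrArg (eval r) (ascPochhammer_succ_left R n)
  rw [ascPochhammer_succ_right, eval_mul, eval_mul, eval_comp] at h
  simpa [mul_comm] using h.symm

theorem ascPochhammer_eval_le_eval {S : Type*} [CommSemiring S] [PartialOrder S]
    [IsOrderedRing S] {x y : S} (hx : 0 ≤ x) (hxy : x ≤ y) (n : ℕ) :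
    (ascPochhammer S n).eval x ≤ (ascPochhammer S n).eval y := by
  simp only [ascPochhammer_eval_eq_prod_range]
  exact prod_le_prod (fun j _ => by positivity) fun j _ => by gcongr

theorem mul_ascPochhammer_eval_succ_le {S : Type*} [CommSemiring S] [PartialOrder S]
    [IsOrderedRing S] {x y : S} (hx : 0 ≤ x) (hxy : x ≤ y) (n : ℕ) :
    y * (ascPochhammer S (n + 1)).eval x ≤ x * (ascPochhammer S (n + 1)).eval y := by
  simp only [ascPochhammer_succ_left, eval_mul, eval_X, eval_comp, eval_add, eval_one]
  have h := ascPochhammer_eval_le_eval (add_nonneg hx zero_le_one) (add_le_add_left hxy 1) n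
  calc y * (x * (ascPochhammer S n).eval (x + 1))
      = x * y * (ascPochhammer S n).eval (x + 1) := by ring
    _ ≤ x * y * (ascPochhammer S n).eval (y + 1) := by gcongr; exact mul_nonneg hx (hx.trans hxy)
    _ = x * (y * (ascPochhammer S n).eval (y + 1)) := by ring

theorem hasSum_sub_add_one_of_tendsto_zero {G : Type*} [AddCommGroup G] [TopologicalSpace G]
    [IsTopologicalAddGroup G] [T2Space G] {g : ℕ → G}
    (hs : Summable fun n => g n - g (n + 1)) (hg : Tendsto g atTop (𝓝 0)) :
    HasSum (fun n => g n - g (n + 1)) (g 0) := by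
  rw [hs.hasSum_iff_tendsto_nat]
  simp_rw [sum_range_sub']
  simpa using (tendsto_const_nhds (x := g 0)).sub hg

namespace Real

-- At a pole both sides vanish: `GammaSeq x n = 0` eventually and `Γ x = 0`.
theorem tendsto_inv_GammaSeq (x : ℝ) :
    Tendsto (fun n => (GammaSeq x n)⁻¹) atTop (𝓝 (Gamma x)⁻¹) := by
  by_cases hx : ∀ m : ℕ, x ≠ -m
  · exact (GammaSeq_tendsto_Gamma x).inv₀ (Gamma_ne_zero hx)
  obtain ⟨m, rfl⟩ : ∃ m : ℕ, x = -m := by simpa using hx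
  rw [Gamma_neg_nat_eq_zero, inv_zero]
  refine tendsto_const_nhds.congr' ?_
  filter_upwards [eventually_ge_atTop m] with n hn
  rw [GammaSeq, prod_eq_zero (mem_range.2 (Nat.lt_succ_of_le hn)) (by ring), div_zero, inv_zero]

theorem tendsto_ascPochhammer_div_factorial_mul_rpow (x : ℝ) :
    Tendsto (fun n : ℕ => (ascPochhammer ℝ n).eval x / (n ! * (n : ℝ) ^ (x - 1))) atTop
      (𝓝 (Gamma x)⁻¹) := by
  have h := (tendsto_inv_GammaSeq x).mul (tendsto_natCast_div_add_atTop x)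
  rw [mul_one] at h
  refine h.congr' ?_
  filter_upwards [eventually_gt_atTop 0, eventually_gt_atTop ⌈-x⌉₊] with n hn hxn
  have hn : (0 : ℝ) < n := by exact_mod_cast hn
  have hxn : n + x ≠ 0 := by
    have := Nat.lt_of_ceil_lt hxn; linarith
  rw [GammaSeq, prod_range_succ, ← ascPochhammer_eval_eq_prod_range, rpow_sub_one hn.ne']
  field_simp
  ring

theorem tendsto_ascPochhammer_mul_div_ascPochhammer_mul {p q r s : ℝ} (hpq : p + q = r + s)
    (hr : ∀ m : ℕ, r ≠ -m) (hs : ∀ m : ℕ, s ≠ -m) :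
    Tendsto (fun n : ℕ => (ascPochhammer ℝ n).eval p * (ascPochhammer ℝ n).eval q /
        ((ascPochhammer ℝ n).eval r * (ascPochhammer ℝ n).eval s)) atTop
      (𝓝 (Gamma r * Gamma s / (Gamma p * Gamma q))) := by
  have h := ((tendsto_ascPochhammer_div_factorial_mul_rpow p).mul
    (tendsto_ascPochhammer_div_factorial_mul_rpow q)).div
    ((tendsto_ascPochhammer_div_factorial_mul_rpow r).mul
      (tendsto_ascPochhammer_div_factorial_mul_rpow s))
    (mul_ne_zero (inv_ne_zero (Gamma_ne_zero hr)) (inv_ne_zero (Gamma_ne_zero hs)))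
  rw [← mul_inv, ← mul_inv, div_inv_eq_mul, inv_mul_eq_div] at h
  refine h.congr' ?_
  filter_upwards [eventually_ne_atTop 0] with n hn
  have hn : (0 : ℝ) < n := by positivity
  have hpow : (n : ℝ) ^ (p - 1) * (n : ℝ) ^ (q - 1) = (n : ℝ) ^ (r - 1) * (n : ℝ) ^ (s - 1) := by
    rw [← rpow_add hn, ← rpow_add hn, show p - 1 + (q - 1) = r - 1 + (s - 1) by linarith]
  rw [Pi.div_apply, div_mul_div_comm, div_mul_div_comm, mul_mul_mul_comm, hpow, ← mul_mul_mul_comm,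
    div_div_div_cancel_right₀ (by positivity)]

end Real

open Real

section Gauss

theorem ne_neg_natCast_of_pos {x : ℝ} (hx : 0 < x) : ∀ m : ℕ, x ≠ -m :=
  fun m hm => by linarith [m.cast_nonneg (α := ℝ)]

theorem add_natCast_ne_neg_natCast {c : ℝ} (hc : ∀ m : ℕ, c ≠ -m) (n : ℕ) :
    ∀ m : ℕ, c + n ≠ -m :=
  fun m hm => hc (m + n) (by push_cast; linarith)

variable {a b : ℝ}

theorem ordinaryHypergeometricCoefficient_zero {c : ℝ} :
    ordinaryHypergeometricCoefficient a b c 0 = 1 := by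
  simp [ordinaryHypergeometricCoefficient]

theorem ordinaryHypergeometric_one_eq_tsum {c : ℝ} :
    ₂F₁ a b c (1 : ℝ) = ∑' n, ordinaryHypergeometricCoefficient a b c n := by
  simp [ordinaryHypergeometric, ordinaryHypergeometric_sum_eq]

theorem ordinaryHypergeometricCoefficient_mul_rpow_eq {c : ℝ} {n : ℕ} (hn : n ≠ 0) :
    ordinaryHypergeometricCoefficient a b c n * (n : ℝ) ^ (c + 1 - a - b) =
      (ascPochhammer ℝ n).eval a / (n ! * (n : ℝ) ^ (a - 1)) *
        ((ascPochhammer ℝ n).eval b / (n ! * (n : ℝ) ^ (b - 1))) /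
        ((ascPochhammer ℝ n).eval c / (n ! * (n : ℝ) ^ (c - 1))) := by
  have hn : (0 : ℝ) < n := by positivity
  have hpow : (n : ℝ) ^ (c + 1 - a - b) * ((n : ℝ) ^ (a - 1) * (n : ℝ) ^ (b - 1)) =
      (n : ℝ) ^ (c - 1) := by
    rw [← rpow_add hn, ← rpow_add hn]; ring_nf
  have : (n : ℝ) ^ (a - 1) ≠ 0 := by positivity
  have : (n : ℝ) ^ (b - 1) ≠ 0 := by positivity
  rw [← hpow]
  field_simp

theorem tendsto_ordinaryHypergeometricCoefficient_mul_rpow {c : ℝ} (hc : ∀ m : ℕ, c ≠ -m) :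
    Tendsto (fun n : ℕ => ordinaryHypergeometricCoefficient a b c n * (n : ℝ) ^ (c + 1 - a - b))
      atTop (𝓝 (Gamma c / (Gamma a * Gamma b))) := by
  have h := ((tendsto_ascPochhammer_div_factorial_mul_rpow a).mul
    (tendsto_ascPochhammer_div_factorial_mul_rpow b)).div
    (tendsto_ascPochhammer_div_factorial_mul_rpow c) (inv_ne_zero (Gamma_ne_zero hc))
  rw [div_inv_eq_mul, ← mul_inv, inv_mul_eq_div] at h
  refine h.congr' ?_
  filter_upwards [eventually_ne_atTop 0] with n hn
  exact (ordinaryHypergeometricCoefficient_mul_rpow_eq hn).symm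

theorem summable_ordinaryHypergeometricCoefficient {c : ℝ} (h : 0 < c - a - b)
    (hc : ∀ m : ℕ, c ≠ -m) : Summable (ordinaryHypergeometricCoefficient a b c) := by
  refine summable_of_isBigO_nat (summable_nat_rpow.2 (show a + b - c - 1 < -1 by linarith)) ?_
  have hO := ((tendsto_ordinaryHypergeometricCoefficient_mul_rpow (a := a) (b := b) hc).isBigO_one
    ℝ).mul (Asymptotics.isBigO_refl (fun n : ℕ => (n : ℝ) ^ (a + b - c - 1)) atTop)
  refine hO.congr' ?_ (by simp)
  filter_upwards [eventually_ne_atTop 0] with n hn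
  have hn : (0 : ℝ) < n := by positivity
  rw [mul_assoc, ← rpow_add hn, show c + 1 - a - b + (a + b - c - 1) = 0 by ring, rpow_zero,
    mul_one]

theorem tendsto_natCast_mul_ordinaryHypergeometricCoefficient {c : ℝ} (h : 0 < c - a - b)
    (hc : ∀ m : ℕ, c ≠ -m) :
    Tendsto (fun n : ℕ => n * ordinaryHypergeometricCoefficient a b c n) atTop (𝓝 0) := by
  have hpow : Tendsto (fun n : ℕ => (n : ℝ) ^ (-(c - a - b))) atTop (𝓝 0) :=
    (tendsto_rpow_neg_atTop h).comp tendsto_natCast_atTop_atTop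
  have h := (tendsto_ordinaryHypergeometricCoefficient_mul_rpow (a := a) (b := b) hc).mul hpow
  rw [mul_zero] at h
  refine h.congr' ?_
  filter_upwards [eventually_ne_atTop 0] with n hn
  have hn : (0 : ℝ) < n := by positivity
  rw [mul_assoc, ← rpow_add hn, show c + 1 - a - b + -(c - a - b) = 1 by ring, rpow_one, mul_comm]

theorem ordinaryHypergeometricCoefficient_contiguous {c : ℝ} (hc : ∀ m : ℕ, c ≠ -m) (n : ℕ) :
    c * (c - a - b) * ordinaryHypergeometricCoefficient a b c n -
        (c - a) * (c - b) * ordinaryHypergeometricCoefficient a b (c + 1) n =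
      c * (n * ordinaryHypergeometricCoefficient a b c n) -
        c * ((n + 1 : ℕ) * ordinaryHypergeometricCoefficient a b c (n + 1)) := by
  have hc0 : c ≠ 0 := by simpa using hc 0
  have hcn : c + n ≠ 0 := fun h => hc n (by linarith)
  have hP := ascPochhammer_eval_ne_zero hc n
  have hshift : (ascPochhammer ℝ n).eval (c + 1) =
      (ascPochhammer ℝ n).eval c * (c + n) / c := by
    rw [eq_div_iff hc0, ascPochhammer_eval_add_one_mul]
  simp only [ordinaryHypergeometricCoefficient, ascPochhammer_succ_eval, hshift,
    Nat.factorial_succ]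
  push_cast
  field_simp
  ring

theorem ordinaryHypergeometric_one_contiguous {c : ℝ} (h : 0 < c - a - b)
    (hc : ∀ m : ℕ, c ≠ -m) :
    c * (c - a - b) * ₂F₁ a b c (1 : ℝ) = (c - a) * (c - b) * ₂F₁ a b (c + 1) (1 : ℝ) := by
  have hs := summable_ordinaryHypergeometricCoefficient h hc
  have hs₁ : Summable (ordinaryHypergeometricCoefficient a b (c + 1)) :=
    summable_ordinaryHypergeometricCoefficient (by linarith)
      (by simpa using add_natCast_ne_neg_natCast hc 1)
  have hD := (hs.hasSum.mul_left (c * (c - a - b))).sub (hs₁.hasSum.mul_left ((c - a) * (c - b)))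
  simp_rw [ordinaryHypergeometricCoefficient_contiguous hc] at hD
  have htel := hasSum_sub_add_one_of_tendsto_zero hD.summable
    (by simpa using (tendsto_natCast_mul_ordinaryHypergeometricCoefficient h hc).const_mul c)
  simp only [ordinaryHypergeometric_one_eq_tsum]
  simpa [sub_eq_zero] using hD.unique htel

theorem ordinaryHypergeometric_one_mul_ascPochhammer {c : ℝ} (h : 0 < c - a - b)
    (hc : ∀ m : ℕ, c ≠ -m) (n : ℕ) :
    ₂F₁ a b c (1 : ℝ) * ((ascPochhammer ℝ n).eval c * (ascPochhammer ℝ n).eval (c - a - b)) =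
      ₂F₁ a b (c + n) (1 : ℝ) *
        ((ascPochhammer ℝ n).eval (c - a) * (ascPochhammer ℝ n).eval (c - b)) := by
  induction n with
  | zero => simp
  | succ n ih =>
    have hstep := ordinaryHypergeometric_one_contiguous (show 0 < c + n - a - b by linarith [n.cast_nonneg (α := ℝ)]) (add_natCast_ne_neg_natCast hc n)
    simp only [ascPochhammer_succ_eval, Nat.cast_succ, ← add_assoc]
    linear_combination ((c + n) * (c - a - b + n)) * ih +
      (ascPochhammer ℝ n).eval (c - a) * (ascPochhammer ℝ n).eval (c - b) * hstep

theorem abs_ordinaryHypergeometricCoefficient_succ_le {x y : ℝ} (hx : 0 < x) (hxy : x ≤ y)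
    (n : ℕ) :
    |ordinaryHypergeometricCoefficient a b y (n + 1)| ≤
      x / y * |ordinaryHypergeometricCoefficient a b x (n + 1)| := by
  have hPx := ascPochhammer_pos (n + 1) x hx
  have hy := hx.trans_le hxy
  have hPy := ascPochhammer_pos (n + 1) y hy
  have key : ((ascPochhammer ℝ (n + 1)).eval y)⁻¹ ≤
      x / y * ((ascPochhammer ℝ (n + 1)).eval x)⁻¹ := by
    rw [← div_eq_mul_inv, div_div, ← one_div, div_le_div_iff₀ hPy (mul_pos hy hPx), one_mul]
    exact mul_ascPochhammer_eval_succ_le hx.le hxy n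
  simp only [ordinaryHypergeometricCoefficient, abs_mul, abs_inv, abs_of_pos hPx, abs_of_pos hPy]
  exact (mul_le_mul_of_nonneg_left key (by positivity)).trans_eq (by ring)

theorem abs_ordinaryHypergeometric_one_sub_one_le {x y : ℝ} (hx : 0 < x) (hxy : x ≤ y)
    (hs : Summable (ordinaryHypergeometricCoefficient a b x)) :
    |₂F₁ a b y (1 : ℝ) - 1| ≤
      x / y * ∑' n, |ordinaryHypergeometricCoefficient a b x (n + 1)| := by
  have hs' := (((summable_nat_add_iff 1).2 hs).abs.mul_left (x / y)).hasSum
  have hbound : ∀ n, ‖ordinaryHypergeometricCoefficient a b y (n + 1)‖ ≤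
      x / y * |ordinaryHypergeometricCoefficient a b x (n + 1)| :=
    abs_ordinaryHypergeometricCoefficient_succ_le hx hxy
  rw [ordinaryHypergeometric_one_eq_tsum, tsum_eq_zero_add' (hs'.summable.of_norm_bounded hbound),
    ordinaryHypergeometricCoefficient_zero, add_sub_cancel_left, ← tsum_mul_left]
  exact tsum_of_norm_bounded hs' hbound

theorem tendsto_ordinaryHypergeometric_one_add_nat {c : ℝ} (h : 0 < c - a - b) :
    Tendsto (fun n : ℕ => ₂F₁ a b (c + n) (1 : ℝ)) atTop (𝓝 1) := by
  obtain ⟨n₀, hn₀⟩ := exists_nat_gt (-c)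
  have hx : 0 < c + n₀ := by linarith
  have hs := summable_ordinaryHypergeometricCoefficient
    (show 0 < c + n₀ - a - b by linarith [n₀.cast_nonneg (α := ℝ)]) (ne_neg_natCast_of_pos hx)
  set K := ∑' n, |ordinaryHypergeometricCoefficient a b (c + n₀) (n + 1)|
  have hlim : Tendsto (fun n : ℕ => (c + n₀) / (c + n) * K) atTop (𝓝 0) := by
    simpa using (tendsto_const_nhds.div_atTop
      (tendsto_atTop_add_const_left _ c tendsto_natCast_atTop_atTop)).mul_const K
  rw [tendsto_iff_norm_sub_tendsto_zero]
  refine squeeze_zero' (Eventually.of_forall fun _ => norm_nonneg _) ?_ hlim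
  filter_upwards [eventually_ge_atTop n₀] with n hn
  exact abs_ordinaryHypergeometric_one_sub_one_le hx (by gcongr) hs

end Gauss

theorem ordinaryHypergeometric_one_eq_Gamma {a b c : ℝ} (h : 0 < c - a - b)
    (hc : ∀ m : ℕ, c ≠ -m) :
    ₂F₁ a b c (1 : ℝ) = Gamma c * Gamma (c - a - b) / (Gamma (c - a) * Gamma (c - b)) := by
  have hδ := ne_neg_natCast_of_pos h
  have hlim := (tendsto_ordinaryHypergeometric_one_add_nat h).mul
    (tendsto_ascPochhammer_mul_div_ascPochhammer_mul (p := c - a) (q := c - b) (by ring) hc hδ)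
  rw [one_mul] at hlim
  refine tendsto_nhds_unique (tendsto_const_nhds.congr fun n => ?_) hlim
  rw [← mul_div_assoc, eq_div_iff (mul_ne_zero (ascPochhammer_eval_ne_zero hc n)
    (ascPochhammer_eval_ne_zero hδ n))]
  exact ordinaryHypergeometric_one_mul_ascPochhammer h hc n

theorem stmt_15_general (a b c : ℝ) (h : 0 < c - a - b)
    (hc : ∀ m : ℕ, c ≠ -(m : ℝ)) :
    HasSum
      (fun j : ℕ =>
        (ascPochhammer ℝ j).eval a * (ascPochhammer ℝ j).eval b /
          ((ascPochhammer ℝ j).eval c * (Nat.factorial j : ℝ)))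
      (Real.Gamma c * Real.Gamma (c - a - b) / (Real.Gamma (c - a) * Real.Gamma (c - b))) := by
  have hsum := (summable_ordinaryHypergeometricCoefficient h hc).hasSum
  rw [← ordinaryHypergeometric_one_eq_tsum, ordinaryHypergeometric_one_eq_Gamma h hc] at hsum
  convert hsum using 2 with j
  simp only [ordinaryHypergeometricCoefficient]
  ring

/-- Gauss's summation theorem: `₂F₁(a, b; c; 1) = Γ(c)Γ(c-a-b)/(Γ(c-a)Γ(c-b))`. -/
theorem stmt_15 (a b c : ℝ) (h : 0 < c - a - b)
    (hc : ∀ m : ℕ, c ≠ -(m : ℝ)) (hca : ∀ m : ℕ, c - a ≠ -(m : ℝ))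
    (hcb : ∀ m : ℕ, c - b ≠ -(m : ℝ)) :
    HasSum
      (fun j : ℕ =>
        (ascPochhammer ℝ j).eval a * (ascPochhammer ℝ j).eval b /
          ((ascPochhammer ℝ j).eval c * (Nat.factorial j : ℝ)))
      (Real.Gamma c * Real.Gamma (c - a - b) / (Real.Gamma (c - a) * Real.Gamma (c - b))) :=
  stmt_15_general a b c h hc
end

section
/- Let F_q be a finite field with q ≡ 1 (mod 3), let ψ be a multiplicative character of F_q of order 3, and ε the trivial character. Then the Gaussian hypergeometric value ₂F₁(ψ, ψ̄; ε | 1)_q equals -1/q. -/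
open scoped BigOperators

/-- Greene's normalized Jacobi sum `binom(A, B) := B(-1)/q · ∑_x A(x) B̄(1-x)`
(characters vanish on `0`). -/
noncomputable def greeneBinom {F : Type*} [Field F] [Fintype F] (A B : MulChar F ℂ) : ℂ :=
  B (-1) / (Fintype.card F : ℂ) * ∑ x : F, A x * B⁻¹ (1 - x)

/-- Greene's Gaussian hypergeometric function
`₂F₁(A, B; C | x)_q := (q/(q-1)) ∑_χ binom(Aχ, χ) binom(Bχ, Cχ) χ(x)`. -/
noncomputable def greene2F1 {F : Type*} [Field F] [Fintype F]
    (A B C : MulChar F ℂ) (x : F) : ℂ :=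
  haveI : Fintype (MulChar F ℂ) := Fintype.ofFinite _
  (Fintype.card F : ℂ) / ((Fintype.card F : ℂ) - 1) *
    ∑ χ : MulChar F ℂ, greeneBinom (A * χ) χ * greeneBinom (B * χ) (C * χ) * χ x

/-!
Expanding both normalized Jacobi sums writes `₂F₁(A, B; ε | 1)` as a double sum over `x, y` of
`A(x) B(y)` times `∑_χ χ(xy / ((1-x)(1-y)))`. By orthogonality of characters this inner sum
picks out the line `x + y = 1`, so `₂F₁(A, B; ε | 1) = J(A, B) / q`. For `ψ` of order 3,
`J(ψ, ψ̄) = -ψ(-1) = -1`, since `ψ(-1)` is a square root of unity of odd order.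
-/

namespace MulChar

variable {M R : Type*} [CommMonoid M] [Finite M] [CommRing R] [IsDomain R]
  [HasEnoughRootsOfUnity R (Monoid.exponent Mˣ)] [Fintype (MulChar M R)]

theorem sum_characters_eq_zero {a : M} (ha : a ≠ 1) : ∑ χ : MulChar M R, χ a = 0 := by
  obtain ⟨χ, hχ⟩ := exists_apply_ne_one_of_hasEnoughRootsOfUnity M R ha
  refine eq_zero_of_mul_eq_self_left hχ ?_
  simp only [Finset.mul_sum, ← MulChar.mul_apply]
  exact Fintype.sum_bijective _ (Group.mulLeft_bijective χ) _ _ fun _ ↦ rfl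

theorem sum_characters_eq [DecidableEq M] (a : M) :
    ∑ χ : MulChar M R, χ a = if a = 1 then (Nat.card Mˣ : R) else 0 := by
  split_ifs with ha
  · simp only [ha, map_one, Finset.sum_const, Finset.card_univ, nsmul_eq_mul, mul_one,
      ← Nat.card_eq_fintype_card, card_eq_card_units_of_hasEnoughRootsOfUnity M R]
  · exact sum_characters_eq_zero ha

end MulChar

section Greene

variable {F : Type*} [Field F]

lemma eq_one_sub_of_mul_mul_inv_eq_one {x y : F} (h : x * y * ((1 - x) * (1 - y))⁻¹ = 1) :
    y = 1 - x := by
  have hne : (1 - x) * (1 - y) ≠ 0 := by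
    rintro h0
    simp [h0] at h
  linear_combination (mul_inv_eq_one₀ hne).mp h

variable [Fintype F]

lemma greeneBinom_mul_greeneBinom (A B χ : MulChar F ℂ) :
    greeneBinom (A * χ) χ * greeneBinom (B * χ) χ =
      1 / (Fintype.card F : ℂ) ^ 2 *
        ∑ x : F, ∑ y : F, A x * B y * χ (x * y * ((1 - x) * (1 - y))⁻¹) := by
  have hsign : χ (-1) * χ (-1) = 1 := by rw [← map_mul, neg_mul_neg, mul_one, map_one]
  rw [greeneBinom, greeneBinom, mul_mul_mul_comm, Finset.sum_mul_sum, div_mul_div_comm, hsign,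
    ← sq]
  congr 1
  refine Finset.sum_congr rfl fun x _ ↦ Finset.sum_congr rfl fun y _ ↦ ?_
  simp only [MulChar.mul_apply, MulChar.inv_apply', map_mul, mul_inv]
  ring

/-- Orthogonality detects `y = 1 - x` except where `x (1 - x) = 0`, which is harmless because
there `A x * B y = 0`. -/
lemma mul_sum_characters_eq_ite [DecidableEq F] [Fintype (MulChar F ℂ)] (A B : MulChar F ℂ)
    (x y : F) :
    A x * B y * ∑ χ : MulChar F ℂ, χ (x * y * ((1 - x) * (1 - y))⁻¹) =
      if y = 1 - x then ((Fintype.card F : ℂ) - 1) * (A x * B y) else 0 := by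
  have hcard : (Nat.card Fˣ : ℂ) = (Fintype.card F : ℂ) - 1 := by
    rw [Nat.card_eq_fintype_card, Fintype.card_units, Nat.cast_sub Fintype.card_pos, Nat.cast_one]
  rw [MulChar.sum_characters_eq, hcard]
  split_ifs with harg hy hy
  · ring
  · exact absurd (eq_one_sub_of_mul_mul_inv_eq_one harg) hy
  · subst hy
    have : x * (1 - x) = 0 := by
      by_contra hne
      rw [sub_sub_cancel, mul_comm (1 - x) x, mul_inv_cancel₀ hne] at harg
      exact harg rfl
    rcases mul_eq_zero.mp this with hx | hx <;> simp [hx, MulChar.map_zero]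
  · simp

theorem greene2F1_one_one (A B : MulChar F ℂ) :
    greene2F1 A B 1 (1 : F) = jacobiSum A B / (Fintype.card F : ℂ) := by
  classical
  let : Fintype (MulChar F ℂ) := Fintype.ofFinite _
  have hq : (Fintype.card F : ℂ) - 1 ≠ 0 := by
    rw [sub_ne_zero]
    exact_mod_cast Fintype.one_lt_card.ne'
  have hsum : ∑ χ : MulChar F ℂ, greeneBinom (A * χ) χ * greeneBinom (B * χ) χ =
      ((Fintype.card F : ℂ) - 1) / (Fintype.card F : ℂ) ^ 2 * jacobiSum A B := by
    simp only [greeneBinom_mul_greeneBinom, ← Finset.mul_sum]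
    rw [Finset.sum_comm]
    simp only [Finset.sum_comm (γ := MulChar F ℂ), ← Finset.mul_sum, mul_sum_characters_eq_ite,
      Finset.sum_ite_eq', Finset.mem_univ, if_true, jacobiSum]
    ring
  simp only [greene2F1, one_mul, MulChar.map_one, mul_one]
  convert congrArg (_ * ·) hsum using 1
  field_simp

end Greene

theorem stmt_16_general {F : Type*} [Field F] [Fintype F]
    (ψ : MulChar F ℂ) (hψ : orderOf ψ = 3) :
    greene2F1 ψ ψ⁻¹ 1 (1 : F) = -1 / (Fintype.card F : ℂ) := by
  have hψ1 : ψ ≠ 1 := by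
    rintro rfl
    simp at hψ
  have hψ_neg_one : ψ (-1) = 1 :=
    MulChar.val_neg_one_eq_one_of_odd_order (by decide) (hψ ▸ pow_orderOf_eq_one ψ)
  rw [greene2F1_one_one, jacobiSum_nontrivial_inv hψ1, hψ_neg_one]

/-- `₂F₁(ψ, ψ̄; ε | 1)_q = -1/q` for a cubic character `ψ` when `q ≡ 1 (mod 3)`. -/
theorem stmt_16 {F : Type*} [Field F] [Fintype F]
    (hq : Fintype.card F % 3 = 1) (ψ : MulChar F ℂ) (hψ : orderOf ψ = 3) :
    greene2F1 ψ ψ⁻¹ 1 (1 : F) = -1 / (Fintype.card F : ℂ) :=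
  stmt_16_general ψ hψ
end

section
/- For every nonnegative integer ν, κ(3/2, 3/2, ν) := (1/((2ν+1)! · (1/2))) · ∑_{μ=0}^{ν} [Γ(1/2)Γ(2ν-μ+3/2)/Γ(1/2-μ)] · binomial(ν+1/2, ν-μ) · binomial(ν+1/2, μ) equals √π · 2^{-2ν-1} · C(2ν+2, ν+1). -/
open Finset Nat Real

namespace Real

lemma Gamma_nat_add_half_eq_factorial (k : ℕ) :
    Gamma (k + 1 / 2) = √π * (2 * k)! / (4 ^ k * k !) := by
  cases k with
  | zero => simp [-one_div, Gamma_one_half_eq]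
  | succ k =>
    rw [Nat.cast_succ, Gamma_nat_add_one_add_half,
      show 2 * (k + 1) = 2 * k + 1 + 1 by ring, factorial_eq_mul_doubleFactorial,
      show 2 * k + 1 + 1 = 2 * (k + 1) by ring, doubleFactorial_two_mul,
      show (4 : ℝ) = 2 * 2 by norm_num, mul_pow]
    push_cast
    field_simp

lemma Gamma_half_sub_nat_mul_Gamma_nat_add_half (μ : ℕ) :
    Gamma (1 / 2 - μ) * Gamma (μ + 1 / 2) = (-1) ^ μ * π := by
  have h := Gamma_mul_Gamma_one_sub (1 / 2 - μ)
  rw [show 1 - (1 / 2 - (μ : ℝ)) = μ + 1 / 2 by ring, mul_sub, mul_one_div,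
    sin_pi_div_two_sub, mul_comm π, cos_nat_mul_pi] at h
  rw [h, div_eq_mul_inv, ← inv_pow, inv_neg, inv_one, mul_comm]

lemma one_div_Gamma_half_sub_nat (μ : ℕ) :
    1 / Gamma (1 / 2 - μ) = (-1) ^ μ * Gamma (μ + 1 / 2) / π := by
  have h := Gamma_half_sub_nat_mul_Gamma_nat_add_half μ
  have hπ := pi_pos.ne'
  have hsq : ((-1 : ℝ) ^ μ) ^ 2 = 1 := by rw [← pow_mul, pow_mul', neg_one_sq, one_pow]
  have hΓ : Gamma (1 / 2 - μ) ≠ 0 := by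
    rintro h0
    rw [h0, zero_mul] at h
    exact mul_ne_zero (pow_ne_zero _ (by norm_num)) hπ h.symm
  rw [eq_div_iff hπ, div_mul_eq_mul_div, one_mul, div_eq_iff hΓ]
  linear_combination -(-1 : ℝ) ^ μ * h - π * hsq

end Real

lemma genBinom_mul_Gamma {x : ℝ} {j : ℕ} (hx : ∀ i < j, x ≠ i) :
    genBinom x j * (j ! * Gamma (x - j + 1)) = Gamma (x + 1) := by
  induction j with
  | zero => simp [genBinom]
  | succ j ih =>
    have hxj : x - j ≠ 0 := sub_ne_zero.2 (hx j j.lt_succ_self)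
    rw [← ih fun i hi ↦ hx i (by omega), genBinom, genBinom, prod_range_succ, factorial_succ,
      Nat.cast_succ, show x - (j + 1) + 1 = x - j by ring, Gamma_add_one hxj]
    push_cast
    field_simp

noncomputable def wzSummand (N m : ℕ) : ℝ :=
  (-1) ^ m * ((N - m).choose m * (N - m).centralBinom : ℝ) / (2 * m + 1)

noncomputable def wzCertificate (N m : ℕ) : ℝ :=
  -2 * m * (2 * m + 1) / (N + 1) * wzSummand (N + 1) m

lemma wzSummand_eq_zero {N m : ℕ} (h : N < 2 * m) : wzSummand N m = 0 := by
  simp [wzSummand, Nat.choose_eq_zero_of_lt (show N - m < m by omega)]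

/-- For `N = n + m` every term is a rational multiple of `C(n, m) · centralBinom n`. -/
lemma wzSummand_recurrence_of_le {n m : ℕ} (h : m ≤ n) :
    ((n + m : ℕ) + 2) * wzSummand (n + m + 1) m - 4 * ((n + m : ℕ) + 1) * wzSummand (n + m) m =
      wzCertificate (n + m) (m + 1) - wzCertificate (n + m) m := by
  have hmn : (m : ℝ) ≤ n := by exact_mod_cast h
  have hchoose_succ : ((n + 1).choose m : ℝ) = (n + 1) * n.choose m / (n + 1 - m) := by
    have := congrArg (Nat.cast (R := ℝ)) (Nat.choose_mul_succ_eq n m)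
    push_cast [Nat.cast_sub (by omega : m ≤ n + 1)] at this
    rw [eq_div_iff (by linarith)]
    linear_combination -this
  have hcentral : ((n + 1).centralBinom : ℝ) = 2 * (2 * n + 1) * n.centralBinom / (n + 1) := by
    have := congrArg (Nat.cast (R := ℝ)) (Nat.succ_mul_centralBinom_succ n)
    push_cast at this
    rw [eq_div_iff (by positivity)]
    linear_combination this
  have hchoose_succ_right : (n.choose (m + 1) : ℝ) = n.choose m * (n - m) / (m + 1) := by
    have := congrArg (Nat.cast (R := ℝ)) (Nat.choose_succ_right_eq n m)
    push_cast [Nat.cast_sub h] at this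
    rw [eq_div_iff (by positivity)]
    linear_combination this
  have hnm : (n : ℝ) + 1 - m ≠ 0 := by linarith
  simp only [wzCertificate, wzSummand, show n + m + 1 - m = n + 1 by omega, Nat.add_sub_cancel,
    show n + m + 1 - (m + 1) = n by omega, hchoose_succ, hcentral, hchoose_succ_right]
  push_cast
  field_simp
  ring

lemma wzSummand_recurrence (N m : ℕ) :
    ((N : ℝ) + 2) * wzSummand (N + 1) m - 4 * (N + 1) * wzSummand N m =
      wzCertificate N (m + 1) - wzCertificate N m := by
  rcases lt_trichotomy (2 * m) (N + 1) with h | h | h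
  · obtain ⟨n, rfl⟩ : ∃ n, N = n + m := ⟨N - m, by omega⟩
    exact_mod_cast wzSummand_recurrence_of_le (by omega)
  · have hm : (2 * m : ℝ) = N + 1 := by exact_mod_cast h
    have hcoeff : -2 * m * (2 * m + 1) / ((N : ℝ) + 1) = -(N + 2) := by
      rw [div_eq_iff (by positivity)]
      linear_combination (-(2 * (m : ℝ)) - N - 2) * hm
    simp only [wzCertificate, wzSummand_eq_zero (by omega : N < 2 * m),
      wzSummand_eq_zero (by omega : N + 1 < 2 * (m + 1)), hcoeff]
    ring
  · simp [wzCertificate, wzSummand_eq_zero (by omega : N < 2 * m),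
      wzSummand_eq_zero (by omega : N + 1 < 2 * m),
      wzSummand_eq_zero (by omega : N + 1 < 2 * (m + 1))]

lemma sum_wzSummand_succ (N : ℕ) :
    ((N : ℝ) + 2) * ∑ m ∈ range (N + 2), wzSummand (N + 1) m =
      4 * (N + 1) * ∑ m ∈ range (N + 1), wzSummand N m := by
  have htel := sum_range_sub (wzCertificate N) (N + 2)
  rw [← sum_congr rfl fun m _ ↦ wzSummand_recurrence N m, sum_sub_distrib, ← mul_sum, ← mul_sum,
    sum_range_succ (wzSummand N), wzSummand_eq_zero (by omega : N < 2 * (N + 1)), add_zero,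
    wzCertificate, wzCertificate, wzSummand_eq_zero (by omega : N + 1 < 2 * (N + 2))] at htel
  simpa [sub_eq_zero] using htel

lemma sum_wzSummand (N : ℕ) : ∑ m ∈ range (N + 1), wzSummand N m = 4 ^ N / (N + 1) := by
  induction N with
  | zero => simp [wzSummand]
  | succ N ih =>
    have h := sum_wzSummand_succ N
    rw [ih] at h
    field_simp at h
    rw [eq_div_iff (by positivity)]
    push_cast
    linear_combination h

lemma kappa_summand_eq {ν μ : ℕ} (h : μ ≤ ν) :
    Gamma (1 / 2) * Gamma (2 * (ν : ℝ) - μ + 3 / 2) / Gamma (1 / 2 - μ) *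
        genBinom ((ν : ℝ) + 1 / 2) (ν - μ) * genBinom ((ν : ℝ) + 1 / 2) μ =
      Gamma (ν + 1 / 2 + 1) ^ 2 / (√π * 4 ^ ν) * wzSummand (2 * ν + 1) μ := by
  obtain ⟨d, rfl⟩ : ∃ d, ν = μ + d := ⟨ν - μ, by omega⟩
  have hx : ∀ i : ℕ, ((μ + d : ℕ) : ℝ) + 1 / 2 ≠ i := by
    intro i hi
    have : ((2 * (μ + d) + 1 : ℕ) : ℝ) = (2 * i : ℕ) := by push_cast at hi ⊢; linarith
    have : 2 * (μ + d) + 1 = 2 * i := by exact_mod_cast this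
    omega
  have hd := genBinom_mul_Gamma (j := d) fun i _ ↦ hx i
  have hμ := genBinom_mul_Gamma (j := μ) fun i _ ↦ hx i
  rw [show ((μ + d : ℕ) : ℝ) + 1 / 2 - d + 1 = μ + 1 / 2 + 1 by push_cast; ring,
    Gamma_add_one (by positivity)] at hd
  rw [show ((μ + d : ℕ) : ℝ) + 1 / 2 - μ + 1 = d + 1 / 2 + 1 by push_cast; ring,
    Gamma_add_one (by positivity), Gamma_nat_add_half_eq_factorial] at hμ
  have hΓ := Gamma_pos_of_pos (show (0 : ℝ) < μ + 1 / 2 by positivity)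
  rw [show 2 * ((μ + d : ℕ) : ℝ) - μ + 3 / 2 = (μ + 2 * d + 1 : ℕ) + 1 / 2 by push_cast; ring,
    Gamma_nat_add_half_eq_factorial, div_eq_mul_one_div _ (Gamma _), one_div_Gamma_half_sub_nat,
    Gamma_one_half_eq, show μ + d - μ = d by omega, eq_div_of_mul_eq (by positivity) hd,
    eq_div_of_mul_eq (by positivity) hμ, wzSummand,
    show 2 * (μ + d) + 1 - μ = μ + 2 * d + 1 by omega, centralBinom_eq_two_mul_choose,
    cast_choose ℝ (by omega : μ ≤ μ + 2 * d + 1),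
    cast_choose ℝ (by omega : μ + 2 * d + 1 ≤ 2 * (μ + 2 * d + 1)),
    show μ + 2 * d + 1 - μ = 2 * d + 1 by omega,
    show 2 * (μ + 2 * d + 1) - (μ + 2 * d + 1) = μ + 2 * d + 1 by omega, factorial_succ (2 * d)]
  push_cast
  field_simp
  rw [sq_sqrt pi_pos.le]
  ring

/-- `κ(3/2, 3/2, ν) = √π · 2^{-2ν-1} · C(2ν+2, ν+1)`. -/
theorem stmt_17 (ν : ℕ) :
    (1 / ((Nat.factorial (2 * ν + 1) : ℝ) * (1 / 2))) *
      ∑ μ ∈ Finset.range (ν + 1),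
        (Real.Gamma (1 / 2) * Real.Gamma (2 * (ν : ℝ) - μ + 3 / 2) /
            Real.Gamma (1 / 2 - μ)) *
          genBinom ((ν : ℝ) + 1 / 2) (ν - μ) * genBinom ((ν : ℝ) + 1 / 2) μ =
      Real.sqrt Real.pi * (2 : ℝ) ^ (-(2 * (ν : ℤ)) - 1) *
        (Nat.choose (2 * ν + 2) (ν + 1) : ℝ) := by
  rw [sum_congr rfl fun μ hμ ↦ kappa_summand_eq (Nat.lt_succ_iff.1 (mem_range.1 hμ)), ← mul_sum,
    sum_subset (range_subset_range.2 (by omega : ν + 1 ≤ 2 * ν + 1 + 1))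
      fun μ _ hμ ↦ wzSummand_eq_zero (by rw [mem_range] at hμ; omega),
    sum_wzSummand, show (ν : ℝ) + 1 / 2 + 1 = (ν + 1 : ℕ) + 1 / 2 by push_cast; ring,
    Gamma_nat_add_half_eq_factorial, cast_choose ℝ (by omega : ν + 1 ≤ 2 * ν + 2),
    show 2 * ν + 2 - (ν + 1) = ν + 1 by omega, show 2 * (ν + 1) = 2 * ν + 1 + 1 by ring,
    show -(2 * (ν : ℤ)) - 1 = -((2 * ν + 1 : ℕ) : ℤ) by push_cast; ring, zpow_neg, zpow_natCast,
    factorial_succ (2 * ν + 1)]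
  push_cast
  field_simp
  rw [show (4 : ℝ) = 2 ^ 2 by norm_num]
  simp only [← pow_mul]
  ring
end
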